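/- arXiv:1403.3254 — 4 statements merged into one kernel-verified Lean document; each statement's English description precedes it below -/
import Mathlib

section
/- Let A be a normal ordered subgroupoid of an ordered groupoid G. Then the relation g ≃_A h, defined to hold iff there exist a,b,c,d ∈ A such that the compositions agb and chd are defined, agb ≤ h and chd ≤ g, is an equivalence relation on the arrows of G. -/
/-!  A one-sorted algebraic formalization of ordered groupoids (Ehresmann / Lawson style).
Arrows form the carrier; composition `g * h` is "defined" when `g⁻¹ * g = h * h⁻¹`,
and is junk otherwise.  `res f g` is the restriction `(f|g)` of axiom (OG3). -/

universe u v w u'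

class OGroupoid (G : Type u) extends PartialOrder G, Mul G, Inv G where
  gpd_assoc : ∀ g h k : G, g⁻¹ * g = h * h⁻¹ → h⁻¹ * h = k * k⁻¹ →
      (g * h) * k = g * (h * k)
  gpd_inv_inv : ∀ g : G, g⁻¹⁻¹ = g
  gpd_mul_inv_rev : ∀ g h : G, g⁻¹ * g = h * h⁻¹ → (g * h)⁻¹ = h⁻¹ * g⁻¹
  gpd_dom_mul : ∀ g h : G, g⁻¹ * g = h * h⁻¹ → (g * h) * (g * h)⁻¹ = g * g⁻¹
  gpd_ran_mul : ∀ g h : G, g⁻¹ * g = h * h⁻¹ → (g * h)⁻¹ * (g * h) = h⁻¹ * h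
  gpd_id_left : ∀ g : G, g * g⁻¹ * g = g
  gpd_id_right : ∀ g : G, g * (g⁻¹ * g) = g
  ord_inv : ∀ g h : G, g ≤ h → g⁻¹ ≤ h⁻¹
  ord_mul : ∀ g₁ g₂ h₁ h₂ : G, g₁ ≤ g₂ → h₁ ≤ h₂ →
      g₁⁻¹ * g₁ = h₁ * h₁⁻¹ → g₂⁻¹ * g₂ = h₂ * h₂⁻¹ → g₁ * h₁ ≤ g₂ * h₂
  res : G → G → G
  res_dom : ∀ f g : G, f * f⁻¹ = f → f ≤ g * g⁻¹ → res f g * (res f g)⁻¹ = f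
  res_le : ∀ f g : G, f * f⁻¹ = f → f ≤ g * g⁻¹ → res f g ≤ g
  res_unique : ∀ f g k : G, f * f⁻¹ = f → f ≤ g * g⁻¹ → k * k⁻¹ = f → k ≤ g →
      k = res f g

namespace OGroupoid

variable {G : Type u} [OGroupoid G]

/-- The domain identity `g𝐝 = g * g⁻¹`. -/
def dm (g : G) : G := g * g⁻¹

/-- The range identity `g𝐫 = g⁻¹ * g`. -/
def rn (g : G) : G := g⁻¹ * g

/-- The composition `g * h` is defined. -/
def Cmp (g h : G) : Prop := g⁻¹ * g = h * h⁻¹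

/-- `e` is an identity of the groupoid. -/
def IsId (e : G) : Prop := e * e⁻¹ = e

/-- The corestriction `(g|f) = (f|g⁻¹)⁻¹` for an identity `f ≤ g𝐫`. -/
def cor (g f : G) : G := (res f g⁻¹)⁻¹

end OGroupoid

open OGroupoid

/-- An ordered functor between ordered groupoids. -/
structure OFunctor (G : Type u) (H : Type v) [OGroupoid G] [OGroupoid H] where
  toFun : G → H
  map_mul : ∀ g h : G, Cmp g h → toFun (g * h) = toFun g * toFun h
  map_inv : ∀ g : G, toFun g⁻¹ = (toFun g)⁻¹
  map_le : ∀ g h : G, g ≤ h → toFun g ≤ toFun h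

namespace OFunctor

variable {G : Type u} {H : Type v} [OGroupoid G] [OGroupoid H]

/-- Star-surjectivity: `φ` is a fibration of ordered groupoids. -/
def StarSurjective (φ : OFunctor G H) : Prop :=
  ∀ e : G, IsId e → ∀ h : H, dm h = φ.toFun e → ∃ g : G, dm g = e ∧ φ.toFun g = h

/-- Star-injectivity: `φ` is an immersion of ordered groupoids. -/
def StarInjective (φ : OFunctor G H) : Prop :=
  ∀ g k : G, dm g = dm k → φ.toFun g = φ.toFun k → g = k

/-- A covering is a star-bijective ordered functor. -/
def IsCovering (φ : OFunctor G H) : Prop := StarSurjective φ ∧ StarInjective φ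

/-- The kernel of an ordered functor. -/
def ker (φ : OFunctor G H) : Set G := {g : G | IsId (φ.toFun g)}

end OFunctor

namespace OGroupoid

variable {G : Type u} [OGroupoid G]

/-- `A` is a subgroupoid: closed under inversion and (defined) composition. -/
def IsSubgroupoid (A : Set G) : Prop :=
  (∀ a ∈ A, a⁻¹ ∈ A) ∧ ∀ a ∈ A, ∀ b ∈ A, Cmp a b → a * b ∈ A

/-- `A` is a normal ordered subgroupoid of `G`: a wide subgroupoid, closed under
restriction, and closed under conjugation `h⁻¹ a k` whenever `h` and `k` have a
common upper bound in `G`. -/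
def IsNormalOSub (A : Set G) : Prop :=
  IsSubgroupoid A ∧
  (∀ e : G, IsId e → e ∈ A) ∧
  (∀ a ∈ A, ∀ e : G, IsId e → e ≤ dm a → res e a ∈ A) ∧
  (∀ a ∈ A, ∀ h k : G, (∃ g : G, h ≤ g ∧ k ≤ g) → dm h = dm a → rn a = dm k →
      h⁻¹ * a * k ∈ A)

/-- The relation `g ≃_A h`: there are `a, b, c, d ∈ A` with `a g b` and `c h d`
defined, `a g b ≤ h` and `c h d ≤ g`. -/
def simA (A : Set G) (g h : G) : Prop :=
  (∃ a ∈ A, ∃ b ∈ A, Cmp a g ∧ Cmp g b ∧ a * g * b ≤ h) ∧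
  (∃ c ∈ A, ∃ d ∈ A, Cmp c h ∧ Cmp h d ∧ c * h * d ≤ g)

/-- The relation inducing the order on `≃_A`-classes: `[g] ≤ [k]` iff there are
`a, b ∈ A` with `a g b` defined and `a g b ≤ k`. -/
def leA (A : Set G) (g k : G) : Prop :=
  ∃ a ∈ A, ∃ b ∈ A, Cmp a g ∧ Cmp g b ∧ a * g * b ≤ k

/-- An `A`-nexus between identities `e` and `f`: a pair `(a,p)` of arrows of `A`
with `a𝐝 ≤ e`, `a𝐫 = f`, `p𝐝 ≤ f`, `p𝐫 = e`. -/
def IsNexus (A : Set G) (a p e f : G) : Prop :=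
  a ∈ A ∧ p ∈ A ∧ dm a ≤ e ∧ rn a = f ∧ dm p ≤ f ∧ rn p = e

end OGroupoid

namespace SimAProof

open OGroupoid

variable {G : Type u} [OGroupoid G]

lemma cmp_self_inv (g : G) : Cmp g g⁻¹ := by
  show g⁻¹ * g = g⁻¹ * g⁻¹⁻¹; rw [gpd_inv_inv]

lemma inv_dm (g : G) : (dm g)⁻¹ = dm g := by
  show (g * g⁻¹)⁻¹ = g * g⁻¹
  rw [gpd_mul_inv_rev g g⁻¹ (cmp_self_inv g), gpd_inv_inv]

lemma isId_dm (g : G) : IsId (dm g) :=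
  gpd_dom_mul g g⁻¹ (cmp_self_inv g)

lemma dm_inv (g : G) : dm g⁻¹ = rn g := by
  show g⁻¹ * g⁻¹⁻¹ = g⁻¹ * g; rw [gpd_inv_inv]

lemma rn_inv (g : G) : rn g⁻¹ = dm g := by
  show g⁻¹⁻¹ * g⁻¹ = g * g⁻¹; rw [gpd_inv_inv]

lemma isId_rn (g : G) : IsId (rn g) := by
  rw [← dm_inv]; exact isId_dm g⁻¹

lemma dm_idem (g : G) : dm g * dm g = dm g := by
  have h := isId_dm g
  rwa [IsId, inv_dm] at h

lemma rn_idem (g : G) : rn g * rn g = rn g := by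
  rw [← dm_inv]; exact dm_idem g⁻¹

lemma inv_rn (g : G) : (rn g)⁻¹ = rn g := by
  rw [← dm_inv]; exact inv_dm g⁻¹

lemma rn_dm (g : G) : rn (dm g) = dm g := by
  show (dm g)⁻¹ * dm g = dm g
  rw [inv_dm, dm_idem]

lemma dm_rn (g : G) : dm (rn g) = rn g := by
  show rn g * (rn g)⁻¹ = rn g
  rw [inv_rn, rn_idem]

lemma dm_mul {g h : G} (hc : Cmp g h) : dm (g * h) = dm g :=
  gpd_dom_mul g h hc

lemma rn_mul {g h : G} (hc : Cmp g h) : rn (g * h) = rn h :=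
  gpd_ran_mul g h hc

lemma cmp_iff {g h : G} : Cmp g h ↔ rn g = dm h := Iff.rfl

lemma dm_mul_self (g : G) : dm g * g = g := gpd_id_left g

lemma mul_rn_self (g : G) : g * rn g = g := gpd_id_right g

lemma le_dm {g h : G} (hle : g ≤ h) : dm g ≤ dm h :=
  ord_mul g h g⁻¹ h⁻¹ hle (ord_inv g h hle) (cmp_self_inv g) (cmp_self_inv h)

lemma le_rn {g h : G} (hle : g ≤ h) : rn g ≤ rn h := by
  rw [← dm_inv, ← dm_inv]; exact le_dm (ord_inv g h hle)

lemma leA_refl (A : Set G) (hA : IsNormalOSub A) (g : G) : leA A g g := by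
  refine ⟨dm g, hA.2.1 _ (isId_dm g), rn g, hA.2.1 _ (isId_rn g), ?_, ?_, ?_⟩
  · show rn (dm g) = dm g; exact rn_dm g
  · show rn g = dm (rn g); exact (dm_rn g).symm
  · rw [dm_mul_self, mul_rn_self]

lemma leA_trans (A : Set G) (hA : IsNormalOSub A) {g h k : G}
    (h1 : leA A g h) (h2 : leA A h k) : leA A g k := by
  obtain ⟨a, ha, b, hb, hag, hgb, hle⟩ := h1
  obtain ⟨a', ha', b', hb', ha'h, hhb', hle'⟩ := h2
  set m := a * g * b with hm
  have hcab : Cmp (a * g) b := by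
    rw [cmp_iff, rn_mul hag]; exact hgb
  have hdm_m : dm m = dm a := by rw [hm, dm_mul hcab, dm_mul hag]
  have hrn_m : rn m = rn b := by rw [hm, rn_mul hcab]
  -- restrict a' on the right to e = dm m
  have he_id : IsId (dm m) := isId_dm m
  have he_le : dm m ≤ dm (a'⁻¹) := by
    rw [dm_inv]
    calc dm m ≤ dm h := le_dm hle
      _ = rn a' := ha'h.symm
  set a₂ := res (dm m) a'⁻¹ with ha₂
  have ha₂dm : a₂ * a₂⁻¹ = dm m := res_dom (dm m) a'⁻¹ he_id he_le
  have ha₂le : a₂ ≤ a'⁻¹ := res_le (dm m) a'⁻¹ he_id he_le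
  have ha₂A : a₂ ∈ A := hA.2.2.1 a'⁻¹ (hA.1.1 a' ha') (dm m) he_id he_le
  set a'' := a₂⁻¹ with ha''
  have ha''A : a'' ∈ A := hA.1.1 a₂ ha₂A
  have ha''rn : rn a'' = dm m := by rw [ha'', rn_inv]; exact ha₂dm
  have ha''le : a'' ≤ a' := by
    have := ord_inv _ _ ha₂le
    rwa [gpd_inv_inv] at this
  -- restrict b' to f = rn m
  have hf_id : IsId (rn m) := isId_rn m
  have hf_le : rn m ≤ dm b' := by
    calc rn m ≤ rn h := le_rn hle
      _ = dm b' := hhb'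
  set b'' := res (rn m) b' with hb''
  have hb''dm : dm b'' = rn m := res_dom (rn m) b' hf_id hf_le
  have hb''le : b'' ≤ b' := res_le (rn m) b' hf_id hf_le
  have hb''A : b'' ∈ A := hA.2.2.1 b' hb' (rn m) hf_id hf_le
  -- compositions
  have hca''a : Cmp a'' a := by rw [cmp_iff, ha''rn, hdm_m]
  have hcbb'' : Cmp b b'' := by rw [cmp_iff, hb''dm, hrn_m]
  have hca''m : Cmp a'' m := by rw [cmp_iff, ha''rn]
  have hcmb'' : Cmp m b'' := by rw [cmp_iff, hb''dm]
  have hca'h : Cmp a' h := ha'h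
  have hchb' : Cmp h b' := hhb'
  refine ⟨a'' * a, hA.1.2 a'' ha''A a ha hca''a, b * b'', hA.1.2 b hb b'' hb''A hcbb'',
    ?_, ?_, ?_⟩
  · rw [cmp_iff, rn_mul hca''a]; exact hag
  · rw [cmp_iff, dm_mul hcbb'']; exact hgb
  · -- show a''*a*g*(b*b'') = a''*m*b'' and bound it
    have hcag_bb : Cmp (a * g) (b * b'') := by
      rw [cmp_iff, rn_mul hag, dm_mul hcbb'']; exact hgb
    have hca''_ag : Cmp a'' (a * g) := by
      rw [cmp_iff, ha''rn, hdm_m, dm_mul hag]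
    have hca''_m : Cmp a'' ((a * g) * b) := hca''m
    have assoc1 : a'' * a * g = a'' * (a * g) := gpd_assoc a'' a g hca''a hag
    have assoc2 : a'' * (a * g) * (b * b'') = a'' * ((a * g) * (b * b'')) :=
      gpd_assoc a'' (a * g) (b * b'') hca''_ag hcag_bb
    have assoc3 : (a * g) * (b * b'') = ((a * g) * b) * b'' :=
      (gpd_assoc (a * g) b b'' hcab hcbb'').symm
    have assoc4 : a'' * (((a * g) * b) * b'') = (a'' * ((a * g) * b)) * b'' :=
      (gpd_assoc a'' ((a * g) * b) b'' hca''_m hcmb'').symm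
    have key : a'' * a * g * (b * b'') = a'' * m * b'' := by
      rw [assoc1, assoc2, assoc3, assoc4]
    rw [key]
    have step1 : a'' * m ≤ a' * h :=
      ord_mul a'' a' m h ha''le hle hca''m hca'h
    have hc1 : Cmp (a'' * m) b'' := by
      rw [cmp_iff, rn_mul hca''m]; exact hcmb''
    have hc2 : Cmp (a' * h) b' := by
      rw [cmp_iff, rn_mul hca'h]; exact hchb'
    have step2 : a'' * m * b'' ≤ a' * h * b' :=
      ord_mul (a'' * m) (a' * h) b'' b' step1 hb''le hc1 hc2
    exact le_trans step2 hle'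

end SimAProof

/-- **Statement 6.** For a normal ordered subgroupoid `A` of an ordered groupoid `G`,
the relation `≃_A` is an equivalence relation on the arrows of `G`. -/
theorem simA_equivalence {G : Type u} [OGroupoid G] (A : Set G)
    (hA : IsNormalOSub A) : Equivalence (simA A) := by
  constructor
  · intro g
    exact ⟨SimAProof.leA_refl A hA g, SimAProof.leA_refl A hA g⟩
  · intro g h ⟨h1, h2⟩
    exact ⟨h2, h1⟩
  · intro g h k ⟨h1, h2⟩ ⟨h3, h4⟩
    exact ⟨SimAProof.leA_trans A hA h1 h3, SimAProof.leA_trans A hA h4 h2⟩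
end

section
/- Let A be a normal ordered subgroupoid of an ordered groupoid G, and write [g] for the ≃_A-class of an arrow g. Then the relation [g] ≤ [k], defined to hold iff there exist a,b ∈ A such that the composition agb is defined and agb ≤ k, is well defined on ≃_A-classes (independent of the representatives g and k) and is a partial order on the set G ⫽ A of classes. -/
/-!  A one-sorted algebraic formalization of ordered groupoids (Ehresmann / Lawson style).
Arrows form the carrier; composition `g * h` is "defined" when `g⁻¹ * g = h * h⁻¹`,
and is junk otherwise.  `res f g` is the restriction `(f|g)` of axiom (OG3). -/

universe u v w u'

open OGroupoid

namespace OGroupoid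

variable {G : Type u} [OGroupoid G]

lemma cmp_self_inv (g : G) : Cmp g g⁻¹ := by
  unfold Cmp; rw [gpd_inv_inv]

lemma dm_inv_eq (g : G) : (g * g⁻¹)⁻¹ = g * g⁻¹ := by
  rw [gpd_mul_inv_rev g g⁻¹ (cmp_self_inv g), gpd_inv_inv]

lemma isId_dm (g : G) : IsId (dm g) := by
  show (g * g⁻¹) * (g * g⁻¹)⁻¹ = g * g⁻¹
  exact gpd_dom_mul g g⁻¹ (cmp_self_inv g)

lemma rn_eq_dm_inv (g : G) : rn g = dm g⁻¹ := by
  unfold rn dm; rw [gpd_inv_inv]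

lemma isId_rn (g : G) : IsId (rn g) := by
  rw [rn_eq_dm_inv]; exact isId_dm g⁻¹

lemma rn_inv_eq (g : G) : (g⁻¹ * g)⁻¹ = g⁻¹ * g := by
  have := dm_inv_eq g⁻¹
  rwa [gpd_inv_inv] at this

lemma isId_mul_self {e : G} (h : IsId e) : e * e = e := by
  have h2 : e⁻¹ = e := by
    conv_lhs => rw [← h]
    rw [gpd_mul_inv_rev e e⁻¹ (cmp_self_inv e), gpd_inv_inv, h]
  nth_rewrite 2 [← h2]
  exact h

lemma cmp_dm_left (g : G) : Cmp (dm g) g := by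
  show (g * g⁻¹)⁻¹ * (g * g⁻¹) = g * g⁻¹
  rw [dm_inv_eq]
  exact isId_mul_self (isId_dm g)

lemma cmp_rn_right (g : G) : Cmp g (rn g) := by
  show g⁻¹ * g = (g⁻¹ * g) * (g⁻¹ * g)⁻¹
  rw [rn_inv_eq]
  exact (isId_mul_self (isId_rn g)).symm

lemma dm_mul {g h : G} (hc : Cmp g h) : dm (g * h) = dm g :=
  gpd_dom_mul g h hc

lemma rn_mul {g h : G} (hc : Cmp g h) : rn (g * h) = rn h :=
  gpd_ran_mul g h hc

lemma le_dm {p q : G} (h : p ≤ q) : dm p ≤ dm q :=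
  ord_mul p q p⁻¹ q⁻¹ h (ord_inv p q h) (cmp_self_inv p) (cmp_self_inv q)

lemma le_rn {p q : G} (h : p ≤ q) : rn p ≤ rn q := by
  have := le_dm (ord_inv p q h)
  rwa [← rn_eq_dm_inv, ← rn_eq_dm_inv] at this

lemma cmp_mul_right {a g b : G} (h1 : Cmp a g) (h2 : Cmp g b) : Cmp (a * g) b := by
  show (a*g)⁻¹ * (a*g) = b * b⁻¹
  rw [gpd_ran_mul a g h1]; exact h2

lemma cmp_left_mul {x a g : G} (h3 : Cmp x a) (h1 : Cmp a g) : Cmp x (a * g) := by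
  show x⁻¹ * x = (a*g) * (a*g)⁻¹
  rw [gpd_dom_mul a g h1]; exact h3

/-- Reassociation of a fivefold product. -/
lemma reassoc5 {x a g b y : G} (h1 : Cmp a g) (h2 : Cmp g b)
    (h3 : Cmp x a) (h4 : Cmp b y) :
    x * (a * g * b) * y = (x * a) * g * (b * y) := by
  have hag_b : Cmp (a * g) b := cmp_mul_right h1 h2
  have hx_ag : Cmp x (a * g) := cmp_left_mul h3 h1
  have hxa_g : Cmp (x * a) g := cmp_mul_right h3 h1
  have hxag_b : Cmp ((x * a) * g) b := cmp_mul_right hxa_g h2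
  rw [← gpd_assoc x (a*g) b hx_ag hag_b, ← gpd_assoc x a g h3 h1,
    gpd_assoc ((x*a)*g) b y hxag_b h4]

/-- The sandwich lemma: if `m ≤ h` and `x h y ≤ k` with `x, y ∈ A` and the
compositions defined, then we may restrict `x, y` to `x', y' ∈ A` with
`x' m y'` defined and `x' m y' ≤ k`, and `rn x' = dm m`, `dm y' = rn m`. -/
lemma sandwich {A : Set G} (hA : IsNormalOSub A) {x y m h k : G}
    (hx : x ∈ A) (hy : y ∈ A) (hxh : Cmp x h) (hhy : Cmp h y)
    (hm : m ≤ h) (hk : x * h * y ≤ k) :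
    ∃ x' ∈ A, ∃ y' ∈ A, Cmp x' m ∧ Cmp m y' ∧ x' * m * y' ≤ k := by
  obtain ⟨⟨hAinv, hAmul⟩, hAid, hAres, _⟩ := hA
  -- restriction of y to rn m
  have hrm_le : rn m ≤ dm y := by
    have h1 : rn m ≤ rn h := le_rn hm
    have h2 : rn h = dm y := hhy
    rwa [h2] at h1
  have hrmId : (rn m) * (rn m)⁻¹ = rn m := isId_rn m
  set y' := res (rn m) y with hy'def
  have hy'dm : y' * y'⁻¹ = rn m := res_dom (rn m) y hrmId hrm_le
  have hy'le : y' ≤ y := res_le (rn m) y hrmId hrm_le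
  have hy'A : y' ∈ A := hAres y hy (rn m) (isId_rn m) hrm_le
  -- corestriction of x to dm m
  have hdm_le : dm m ≤ dm x⁻¹ := by
    have h1 : dm m ≤ dm h := le_dm hm
    have h2 : rn x = dm h := hxh
    rw [← h2, rn_eq_dm_inv] at h1
    exact h1
  have hdmId : (dm m) * (dm m)⁻¹ = dm m := isId_dm m
  set x0 := res (dm m) x⁻¹ with hx0def
  have hx0dm : x0 * x0⁻¹ = dm m := res_dom (dm m) x⁻¹ hdmId hdm_le
  have hx0le : x0 ≤ x⁻¹ := res_le (dm m) x⁻¹ hdmId hdm_le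
  set x' := x0⁻¹ with hx'def
  have hx'le : x' ≤ x := by
    have := ord_inv x0 x⁻¹ hx0le
    rwa [gpd_inv_inv] at this
  have hx'A : x' ∈ A := hAinv x0 (hAres x⁻¹ (hAinv x hx) (dm m) (isId_dm m) hdm_le)
  have hx'rn : x'⁻¹ * x' = dm m := by
    rw [hx'def, gpd_inv_inv]; exact hx0dm
  -- compositions
  have hcx'm : Cmp x' m := hx'rn
  have hcmy' : Cmp m y' := hy'dm.symm
  refine ⟨x', hx'A, y', hy'A, hcx'm, hcmy', ?_⟩
  -- x' * m * y' ≤ x * h * y ≤ k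
  have h1 : x' * m ≤ x * h := ord_mul x' x m h hx'le hm hcx'm hxh
  have hcx'm_y' : Cmp (x' * m) y' := cmp_mul_right hcx'm hcmy'
  have hcxh_y : Cmp (x * h) y := cmp_mul_right hxh hhy
  have h2 : x' * m * y' ≤ x * h * y :=
    ord_mul (x' * m) (x * h) y' y h1 hy'le hcx'm_y' hcxh_y
  exact le_trans h2 hk

/-- Reflexivity of `leA`. -/
lemma leA_refl {A : Set G} (hA : IsNormalOSub A) (g : G) : leA A g g := by
  obtain ⟨_, hAid, _, _⟩ := hA
  refine ⟨dm g, hAid (dm g) (isId_dm g), rn g, hAid (rn g) (isId_rn g),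
    cmp_dm_left g, cmp_rn_right g, ?_⟩
  have h1 : dm g * g = g := gpd_id_left g
  have h2 : g * rn g = g := gpd_id_right g
  rw [show dm g * g * rn g = dm g * (g * rn g) from
    gpd_assoc (dm g) g (rn g) (cmp_dm_left g) (cmp_rn_right g), h2, h1]

/-- Transitivity of `leA`. -/
lemma leA_trans {A : Set G} (hA : IsNormalOSub A) {g h k : G}
    (h1 : leA A g h) (h2 : leA A h k) : leA A g k := by
  obtain ⟨a, haA, b, hbA, hag, hgb, hab⟩ := h1
  obtain ⟨x, hxA, y, hyA, hxh, hhy, hxy⟩ := h2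
  obtain ⟨x', hx'A, y', hy'A, hcx'm, hcmy', hle⟩ :=
    sandwich hA hxA hyA hxh hhy hab hxy
  -- rn x' = dm (a*g*b) = dm a ; dm y' = rn (a*g*b) = rn b
  have hdmm : dm (a * g * b) = dm a := by
    rw [dm_mul (cmp_mul_right hag hgb), dm_mul hag]
  have hrnm : rn (a * g * b) = rn b := rn_mul (cmp_mul_right hag hgb)
  have hcx'a : Cmp x' a := by
    show x'⁻¹ * x' = a * a⁻¹
    have : x'⁻¹ * x' = (a*g*b) * (a*g*b)⁻¹ := hcx'm
    rwa [show (a*g*b) * (a*g*b)⁻¹ = a * a⁻¹ from hdmm] at this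
  have hcby' : Cmp b y' := by
    show b⁻¹ * b = y' * y'⁻¹
    have : (a*g*b)⁻¹ * (a*g*b) = y' * y'⁻¹ := hcmy'
    rwa [show (a*g*b)⁻¹ * (a*g*b) = b⁻¹ * b from hrnm] at this
  obtain ⟨⟨hAinv, hAmul⟩, _, _, _⟩ := hA
  refine ⟨x' * a, hAmul x' hx'A a haA hcx'a, b * y', hAmul b hbA y' hy'A hcby',
    cmp_mul_right hcx'a hag, ?_, ?_⟩
  · exact cmp_left_mul hgb hcby'
  · rwa [← reassoc5 hag hgb hcx'a hcby']

end OGroupoid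

/-- **Statement 7.** For a normal ordered subgroupoid `A` of `G`, the relation
`[g] ≤ [k] ⟺ ∃ a b ∈ A, a g b ≤ k` is well defined on `≃_A`-classes (independent of
the representatives), and is a partial order on the quotient `G ⫽ A`: it is
reflexive, transitive, and antisymmetric up to `≃_A`. -/
theorem leA_well_defined_partial_order {G : Type u} [OGroupoid G] (A : Set G)
    (hA : IsNormalOSub A) :
    (∀ g g' k k' : G, simA A g g' → simA A k k' → (leA A g k ↔ leA A g' k')) ∧
    (∀ g : G, leA A g g) ∧
    (∀ g h k : G, leA A g h → leA A h k → leA A g k) ∧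
    (∀ g h : G, leA A g h → leA A h g → simA A g h) := by
  refine ⟨?_, leA_refl hA, fun g h k => leA_trans hA, fun g h h1 h2 => ⟨h1, h2⟩⟩
  intro g g' k k' hg hk
  constructor
  · intro hgk
    exact leA_trans hA (leA_trans hA hg.2 hgk) hk.1
  · intro hgk
    exact leA_trans hA (leA_trans hA hg.1 hgk) hk.2
end

section
/- Let A be a normal ordered subgroupoid of an ordered groupoid G and let e, f be identities of G. Then e ≃_A f if and only if there exists an A-nexus between e and f, i.e. arrows a, p ∈ A with a𝐝 ≤ e, a𝐫 = f, p𝐝 ≤ f and p𝐫 = e. -/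
/-!  A one-sorted algebraic formalization of ordered groupoids (Ehresmann / Lawson style).
Arrows form the carrier; composition `g * h` is "defined" when `g⁻¹ * g = h * h⁻¹`,
and is junk otherwise.  `res f g` is the restriction `(f|g)` of axiom (OG3). -/

universe u v w u'

open OGroupoid

namespace OGroupoid

variable {G : Type u} [OGroupoid G]

lemma inv_id' {e : G} (he : IsId e) : e⁻¹ = e := by
  have h : (e * e⁻¹)⁻¹ = e⁻¹⁻¹ * e⁻¹ :=
    gpd_mul_inv_rev e e⁻¹ (by rw [gpd_inv_inv])
  unfold IsId at he
  rw [he, gpd_inv_inv, he] at h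
  exact h

lemma mul_id' {e : G} (he : IsId e) : e * e = e := by
  have h := he
  unfold IsId at h
  rw [inv_id' he] at h
  exact h

lemma rn_le' {g h : G} (hg : g ≤ h) : rn g ≤ rn h := by
  unfold rn
  exact ord_mul g⁻¹ h⁻¹ g h (ord_inv g h hg) hg
    (by rw [gpd_inv_inv]) (by rw [gpd_inv_inv])

end OGroupoid

/-- **Statement 8.** For identities `e, f` of `G` and a normal ordered subgroupoid
`A`, `e ≃_A f` if and only if there is an `A`-nexus between `e` and `f`. -/
theorem simA_id_iff_nexus {G : Type u} [OGroupoid G] (A : Set G)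
    (hA : IsNormalOSub A) (e f : G) (he : IsId e) (hf : IsId f) :
    simA A e f ↔ ∃ a p : G, IsNexus A a p e f := by
  have hee : e⁻¹ = e := inv_id' he
  have hff : f⁻¹ = f := inv_id' hf
  have hemul : e * e = e := mul_id' he
  have hfmul : f * f = f := mul_id' hf
  have heid : e * e⁻¹ = e := he
  have hfid : f * f⁻¹ = f := hf
  constructor
  · rintro ⟨⟨a, ha, b, hb, hae, heb, habf⟩, c, hc, d, hd, hcf, hfd, hcde⟩
    -- extract the composability conditions
    unfold Cmp at hae heb hcf hfd
    rw [heid] at hae              -- hae : a⁻¹ * a = e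
    rw [hee, hemul] at heb        -- heb : e = b * b⁻¹
    rw [hfid] at hcf              -- hcf : c⁻¹ * c = f
    rw [hff, hfmul] at hfd        -- hfd : f = d * d⁻¹
    -- a * e * b = a * b, c * f * d = c * d
    have hae2 : a * e = a := by
      rw [← hae]; exact gpd_id_right a
    have hcf2 : c * f = c := by
      rw [← hcf]; exact gpd_id_right c
    rw [hae2] at habf
    rw [hcf2] at hcde
    -- ranges
    have hrb : (a * b)⁻¹ * (a * b) = b⁻¹ * b :=
      gpd_ran_mul a b (by rw [hae, ← heb])
    have hrd : (c * d)⁻¹ * (c * d) = d⁻¹ * d :=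
      gpd_ran_mul c d (by rw [hcf, ← hfd])
    have hrbf : b⁻¹ * b ≤ f := by
      have := rn_le' habf
      unfold rn at this
      rw [hrb, hff, hfmul] at this
      exact this
    have hrde : d⁻¹ * d ≤ e := by
      have := rn_le' hcde
      unfold rn at this
      rw [hrd, hee, hemul] at this
      exact this
    refine ⟨d⁻¹, b⁻¹, hA.1.1 d hd, hA.1.1 b hb, ?_, ?_, ?_, ?_⟩
    · show d⁻¹ * d⁻¹⁻¹ ≤ e
      rw [gpd_inv_inv]; exact hrde
    · show d⁻¹⁻¹ * d⁻¹ = f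
      rw [gpd_inv_inv, ← hfd]
    · show b⁻¹ * b⁻¹⁻¹ ≤ f
      rw [gpd_inv_inv]; exact hrbf
    · show b⁻¹⁻¹ * b⁻¹ = e
      rw [gpd_inv_inv, heb]
  · rintro ⟨a, p, ha, hp, hdae, hraf, hdpf, hrpe⟩
    unfold dm at hdae hdpf
    unfold rn at hraf hrpe
    constructor
    · -- use (p, p⁻¹) : p * e * p⁻¹ = p * p⁻¹ ≤ f
      refine ⟨p, hp, p⁻¹, hA.1.1 p hp, ?_, ?_, ?_⟩
      · show p⁻¹ * p = e * e⁻¹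
        rw [hrpe, heid]
      · show e⁻¹ * e = p⁻¹ * p⁻¹⁻¹
        rw [gpd_inv_inv, hrpe, hee, hemul]
      · have h1 : p * e = p := by rw [← hrpe]; exact gpd_id_right p
        rw [h1]; exact hdpf
    · -- use (a, a⁻¹) : a * f * a⁻¹ = a * a⁻¹ ≤ e
      refine ⟨a, ha, a⁻¹, hA.1.1 a ha, ?_, ?_, ?_⟩
      · show a⁻¹ * a = f * f⁻¹
        rw [hraf, hfid]
      · show f⁻¹ * f = a⁻¹ * a⁻¹⁻¹
        rw [gpd_inv_inv, hraf, hff, hfmul]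
      · have h1 : a * f = a := by rw [← hraf]; exact gpd_id_right a
        rw [h1]; exact hdae
end

section
/- Let θ : G → H be an ordered functor of ordered groupoids and let A = ker θ, a normal ordered subgroupoid of G. Then the induced functor ψ : G ⫽ A → H, [g] ↦ gθ, is well defined and star-injective: for all g, k ∈ G, if gg⁻¹ ≃_A kk⁻¹ and gθ = kθ, then g ≃_A k. -/
/-!  A one-sorted algebraic formalization of ordered groupoids (Ehresmann / Lawson style).
Arrows form the carrier; composition `g * h` is "defined" when `g⁻¹ * g = h * h⁻¹`,
and is junk otherwise.  `res f g` is the restriction `(f|g)` of axiom (OG3). -/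

universe u v w u'

open OGroupoid

section Helpers

variable {G : Type u} {H : Type v} [OGroupoid G] [OGroupoid H]

open OGroupoid

lemma cmp_inv_right (g : G) : Cmp g g⁻¹ := by
  unfold Cmp; rw [gpd_inv_inv]

lemma cmp_inv_left (g : G) : Cmp g⁻¹ g := by
  unfold Cmp; rw [gpd_inv_inv]

lemma isId_dm' (g : G) : IsId (dm g) := gpd_dom_mul g g⁻¹ (cmp_inv_right g)

lemma isId_rn' (g : G) : IsId (rn g) := by
  have h := gpd_dom_mul g⁻¹ g (cmp_inv_left g)
  unfold IsId rn
  rw [h, gpd_inv_inv]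

lemma inv_of_id {e : G} (he : IsId e) : e⁻¹ = e := by
  have h := gpd_mul_inv_rev e e⁻¹ (cmp_inv_right e)
  rw [gpd_inv_inv] at h
  unfold IsId at he
  rw [he] at h
  exact h

lemma rn_of_id {e : G} (he : IsId e) : e⁻¹ * e = e := by
  rw [inv_of_id he]
  nth_rewrite 2 [← inv_of_id he]
  exact he

lemma id_mul' {e g : G} (he : IsId e) (h : Cmp e g) : e * g = g := by
  have h1 : e = g * g⁻¹ := (rn_of_id he).symm.trans h
  rw [h1]
  exact gpd_id_left g

lemma mul_id' {e g : G} (he : IsId e) (h : Cmp g e) : g * e = g := by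
  have h1 : g⁻¹ * g = e := h.trans he
  rw [← h1]
  exact gpd_id_right g

lemma dm_mul' (g h : G) (hc : Cmp g h) : dm (g * h) = dm g := gpd_dom_mul g h hc

lemma rn_mul' (g h : G) (hc : Cmp g h) : rn (g * h) = rn h := gpd_ran_mul g h hc

lemma le_id_dm {x e : G} (he : IsId e) (hx : x ≤ e) : dm x ≤ e := by
  have h1 : x⁻¹ ≤ e⁻¹ := OGroupoid.ord_inv _ _ hx
  rw [inv_of_id he] at h1
  have hce : Cmp e e := (rn_of_id he).trans he.symm
  have h2 := OGroupoid.ord_mul x e x⁻¹ e hx h1 (cmp_inv_right x) hce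
  have hee : e * e = e := by nth_rewrite 2 [← inv_of_id he]; exact he
  rw [hee] at h2
  exact h2

lemma map_cmp (θ : OFunctor G H) {g h : G} (hc : Cmp g h) :
    Cmp (θ.toFun g) (θ.toFun h) := by
  unfold Cmp
  rw [← θ.map_inv g, ← θ.map_inv h, ← θ.map_mul g⁻¹ g (cmp_inv_left g),
    ← θ.map_mul h h⁻¹ (cmp_inv_right h), hc]

lemma map_dm (θ : OFunctor G H) (g : G) : θ.toFun (dm g) = dm (θ.toFun g) := by
  unfold dm
  rw [θ.map_mul g g⁻¹ (cmp_inv_right g), θ.map_inv]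

lemma ker_isId (θ : OFunctor G H) {a : G} (ha : a ∈ θ.ker) :
    IsId (θ.toFun a) := ha

lemma theta_conj (θ : OFunctor G H) {a g b : G} (ha : a ∈ θ.ker) (hb : b ∈ θ.ker)
    (hag : Cmp a g) (hgb : Cmp g b) : θ.toFun (a * g * b) = θ.toFun g := by
  have hagb : Cmp (a * g) b := (rn_mul' a g hag).trans hgb
  rw [θ.map_mul _ _ hagb, θ.map_mul _ _ hag,
    id_mul' (ker_isId θ ha) (map_cmp θ hag),
    mul_id' (ker_isId θ hb) (map_cmp θ hgb)]

/-- From `a · (dm g) · b ≤ dm k` with the compositions defined, extract `rn a = dm g`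
and `dm a ≤ dm k`. -/
lemma extract_nexus {g k a b : G} (h1 : Cmp a (dm g)) (h2 : Cmp (dm g) b)
    (h3 : a * dm g * b ≤ dm k) : rn a = dm g ∧ dm a ≤ dm k := by
  have hrn : rn a = dm g := h1.trans (isId_dm' g)
  have hab : Cmp a b := hrn.trans ((rn_of_id (isId_dm' g)).symm.trans h2)
  rw [mul_id' (isId_dm' g) h1] at h3
  refine ⟨hrn, ?_⟩
  rw [← dm_mul' a b hab]
  exact le_id_dm (isId_dm' k) h3

/-- Key lemma: given `a ∈ ker θ` with `a𝐫 = g𝐝`, `a𝐝 ≤ k𝐝` and `gθ = kθ`,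
produce `p, q ∈ ker θ` with `p g q ≤ k`. -/
lemma key_lemma (θ : OFunctor G H) {g k a : G} (ha : a ∈ θ.ker)
    (hrn : rn a = dm g) (hdm : dm a ≤ dm k) (hθ : θ.toFun g = θ.toFun k) :
    ∃ p ∈ θ.ker, ∃ q ∈ θ.ker, Cmp p g ∧ Cmp g q ∧ p * g * q ≤ k := by
  have hIda : IsId (dm a) := isId_dm' a
  have hk' := OGroupoid.res_dom (dm a) k hIda hdm
  have hk'le : res (dm a) k ≤ k := OGroupoid.res_le (dm a) k hIda hdm
  have hag : Cmp a g := hrn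
  have h2 : dm (a * g) = dm a := dm_mul' a g hag
  have h1 : θ.toFun (a * g) = θ.toFun g := by
    rw [θ.map_mul a g hag]
    exact id_mul' (ker_isId θ ha) (map_cmp θ hag)
  have hIde' : IsId (θ.toFun (dm a)) := by
    rw [map_dm θ a]; exact isId_dm' _
  have hle' : θ.toFun (dm a) ≤ θ.toFun k * (θ.toFun k)⁻¹ := by
    have := θ.map_le _ _ hdm
    rwa [map_dm θ k] at this
  have hu1 : θ.toFun (a * g) = res (θ.toFun (dm a)) (θ.toFun k) := by
    apply OGroupoid.res_unique _ _ _ hIde' hle'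
    · rw [← θ.map_inv, ← θ.map_mul _ _ (cmp_inv_right _)]
      exact congrArg θ.toFun h2
    · rw [h1, hθ]
  have hu2 : θ.toFun (res (dm a) k) = res (θ.toFun (dm a)) (θ.toFun k) := by
    apply OGroupoid.res_unique _ _ _ hIde' hle'
    · rw [← θ.map_inv, ← θ.map_mul _ _ (cmp_inv_right _)]
      exact congrArg θ.toFun hk'
    · exact θ.map_le _ _ hk'le
  have hkey : θ.toFun (res (dm a) k) = θ.toFun (a * g) := hu2.trans hu1.symm
  have hcmp_u : Cmp (a * g)⁻¹ (res (dm a) k) := by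
    unfold Cmp
    rw [gpd_inv_inv, hk']
    exact h2
  refine ⟨a, ha, (a * g)⁻¹ * res (dm a) k, ?_, hag, ?_, ?_⟩
  · show IsId (θ.toFun ((a * g)⁻¹ * res (dm a) k))
    rw [θ.map_mul _ _ hcmp_u, θ.map_inv, ← hkey]
    exact isId_rn' _
  · show rn g = dm ((a * g)⁻¹ * res (dm a) k)
    calc rn g = rn (a * g) := (rn_mul' a g hag).symm
      _ = (a * g)⁻¹ * ((a * g)⁻¹)⁻¹ := by unfold rn; rw [gpd_inv_inv]
      _ = dm ((a * g)⁻¹ * res (dm a) k) := (dm_mul' _ _ hcmp_u).symm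
  · have hassoc : (a * g) * ((a * g)⁻¹ * res (dm a) k) = res (dm a) k := by
      rw [← gpd_assoc (a * g) (a * g)⁻¹ (res (dm a) k) (cmp_inv_right _) hcmp_u]
      show dm (a * g) * res (dm a) k = res (dm a) k
      rw [h2]
      exact id_mul' hIda ((rn_of_id hIda).trans hk'.symm)
    show (a * g) * ((a * g)⁻¹ * res (dm a) k) ≤ k
    rw [hassoc]
    exact hk'le

end Helpers

/-- **Statement 15.** For an ordered functor `θ : G → H` and `A = ker θ`, the induced
functor `ψ : G ⫽ A → H`, `[g] ↦ gθ`, is well defined (`g ≃_A k → gθ = kθ`) and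
star-injective: if `gg⁻¹ ≃_A kk⁻¹` and `gθ = kθ` then `g ≃_A k`. -/
theorem induced_functor_well_defined_star_injective {G : Type u} {H : Type v}
    [OGroupoid G] [OGroupoid H] (θ : OFunctor G H) :
    (∀ g k : G, simA θ.ker g k → θ.toFun g = θ.toFun k) ∧
    (∀ g k : G, simA θ.ker (dm g) (dm k) → θ.toFun g = θ.toFun k →
      simA θ.ker g k) := by
  constructor
  · rintro g k ⟨⟨a, ha, b, hb, hag, hgb, hle1⟩, ⟨c, hc, d, hd, hck, hkd, hle2⟩⟩
    have h1 : θ.toFun g ≤ θ.toFun k := by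
      rw [← theta_conj θ ha hb hag hgb]
      exact θ.map_le _ _ hle1
    have h2 : θ.toFun k ≤ θ.toFun g := by
      rw [← theta_conj θ hc hd hck hkd]
      exact θ.map_le _ _ hle2
    exact le_antisymm h1 h2
  · rintro g k ⟨⟨a, ha, b, hb, hag, hgb, hle1⟩, ⟨c, hc, d, hd, hck, hkd, hle2⟩⟩ hθ
    obtain ⟨hrna, hdma⟩ := extract_nexus hag hgb hle1
    obtain ⟨hrnc, hdmc⟩ := extract_nexus hck hkd hle2
    exact ⟨key_lemma θ ha hrna hdma hθ, key_lemma θ hc hrnc hdmc hθ.symm⟩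
end
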